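/- arXiv:1802.08829 — 8 statements merged into one kernel-verified Lean document; each statement's English description precedes it below -/
import Mathlib

section
/- If (X,d) is a Ptolemy metric space, then the metric ρ(x,y) = log(1 + d(x,y)) is strongly hyperbolic with parameter ε = 2; that is, exp(ρ(x,y) + ρ(z,t)) ≤ exp(ρ(x,z) + ρ(y,t)) + exp(ρ(x,t) + ρ(z,y)) for all x, y, z, t ∈ X. -/
/-! Since `exp (log (1 + a) + log (1 + b)) = (1 + a) (1 + b)`, the claim is the Ptolemy inequality
for the function `1 + d`. Expanding the products, the quadratic terms are handled by the Ptolemy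
inequality of `d` and the linear terms by the triangle inequality. -/

lemma dist_add_dist_le_sum_dist {X : Type*} [PseudoMetricSpace X] (x y z t : X) :
    dist x y + dist z t ≤ dist x z + dist y t + (dist x t + dist z y) := by
  have hxy₁ := dist_triangle x z y
  have hxy₂ := dist_triangle x t y
  have hzt₁ := dist_triangle z x t
  have hzt₂ := dist_triangle z y t
  rw [dist_comm z x] at hzt₁
  rw [dist_comm t y] at hxy₂
  linarith

lemma one_add_dist_mul_le {X : Type*} [PseudoMetricSpace X] {x y z t : X}
    (hPt : dist x y * dist z t ≤ dist x z * dist y t + dist x t * dist z y) :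
    (1 + dist x y) * (1 + dist z t) ≤
      (1 + dist x z) * (1 + dist y t) + (1 + dist x t) * (1 + dist z y) := by
  nlinarith [dist_add_dist_le_sum_dist x y z t]

lemma Real.exp_log_add_log {a b : ℝ} (ha : 0 < a) (hb : 0 < b) :
    Real.exp (Real.log a + Real.log b) = a * b := by
  rw [Real.exp_add, Real.exp_log ha, Real.exp_log hb]

theorem stmt3 {X : Type*} [MetricSpace X]
    (hPt : ∀ x1 x2 x3 x4 : X,
      dist x1 x2 * dist x3 x4 ≤ dist x1 x4 * dist x2 x3 + dist x1 x3 * dist x2 x4)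
    (x y z t : X) :
    Real.exp (Real.log (1 + dist x y) + Real.log (1 + dist z t)) ≤
      Real.exp (Real.log (1 + dist x z) + Real.log (1 + dist y t)) +
      Real.exp (Real.log (1 + dist x t) + Real.log (1 + dist z y)) := by
  have pos (a b : X) : (0 : ℝ) < 1 + dist a b := by positivity
  simp only [Real.exp_log_add_log (pos _ _) (pos _ _)]
  apply one_add_dist_mul_le
  have hxyzt := hPt x y z t
  rw [dist_comm y z] at hxyzt
  linarith
end

section
/- A metric space (X,d) satisfies exp(-ε(x|y)_o) ≤ exp(-ε(x|z)_o) + exp(-ε(z|y)_o) for all x,y,z,o ∈ X if and only if exp((ε/2)(d(x,y)+d(z,t))) ≤ exp((ε/2)(d(x,z)+d(y,t))) + exp((ε/2)(d(x,t)+d(z,y))) for all x,y,z,t ∈ X. -/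
/-
Multiplying by `exp (ε/2 · (d(o,x) + d(o,y) + d(o,z)))` turns each term `exp (-ε (x|y)_o)` of the
first inequality into `exp (ε/2 · (d(x,y) + d(z,o)))`, the corresponding term of the second one
with `t = o`; since the factor is positive, the two inequalities are equivalent quadruple by
quadruple.
-/

open Real

lemma exp_add_le_exp_add_add_exp_add_iff (A B C c : ℝ) :
    exp (A + c) ≤ exp (B + c) + exp (C + c) ↔ exp A ≤ exp B + exp C := by
  rw [exp_add, exp_add, exp_add, ← add_mul]
  exact mul_le_mul_iff_of_pos_right (exp_pos c)

lemma exp_neg_gromov_le_iff {X : Type*} [PseudoMetricSpace X] (ε : ℝ) (x y z o : X) :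
    exp (-ε * ((dist o x + dist o y - dist x y) / 2)) ≤
        exp (-ε * ((dist o x + dist o z - dist x z) / 2)) +
        exp (-ε * ((dist o z + dist o y - dist z y) / 2)) ↔
      exp (ε / 2 * (dist x y + dist z o)) ≤
        exp (ε / 2 * (dist x z + dist y o)) + exp (ε / 2 * (dist x o + dist z y)) := by
  rw [← exp_add_le_exp_add_add_exp_add_iff _ _ _ (ε / 2 * (dist o x + dist o y + dist o z)),
    dist_comm z o, dist_comm y o, dist_comm x o]
  ring_nf

theorem stmt4_general {X : Type*} [MetricSpace X] (ε : ℝ) :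
    (∀ x y z o : X,
      Real.exp (-ε * ((dist o x + dist o y - dist x y) / 2)) ≤
        Real.exp (-ε * ((dist o x + dist o z - dist x z) / 2)) +
        Real.exp (-ε * ((dist o z + dist o y - dist z y) / 2))) ↔
    (∀ x y z t : X,
      Real.exp (ε / 2 * (dist x y + dist z t)) ≤
        Real.exp (ε / 2 * (dist x z + dist y t)) +
        Real.exp (ε / 2 * (dist x t + dist z y))) :=
  forall₄_congr fun x y z o => exp_neg_gromov_le_iff ε x y z o

theorem stmt4 {X : Type*} [MetricSpace X] (ε : ℝ) (hε : 0 < ε) :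
    (∀ x y z o : X,
      Real.exp (-ε * ((dist o x + dist o y - dist x y) / 2)) ≤
        Real.exp (-ε * ((dist o x + dist o z - dist x z) / 2)) +
        Real.exp (-ε * ((dist o z + dist o y - dist z y) / 2))) ↔
    (∀ x y z t : X,
      Real.exp (ε / 2 * (dist x y + dist z t)) ≤
        Real.exp (ε / 2 * (dist x z + dist y t)) +
        Real.exp (ε / 2 * (dist x t + dist z y))) :=
  stmt4_general ε
end

section
/- If (X,d) is a Ptolemy metric space and p ∈ X, then s_p(x,y) = d(x,y)/((1+d(x,p))(1+d(y,p))) defines a metric on X. -/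
/-!
Ptolemy's inequality for the quadruple `(x, z, y, p)` added to the triangle inequality
`d(x,z) ≤ d(x,y) + d(y,z)` gives
`d(x,z) (1 + d(y,p)) ≤ d(x,y) (1 + d(z,p)) + d(y,z) (1 + d(x,p))`,
and dividing by `(1 + d(x,p)) (1 + d(y,p)) (1 + d(z,p))` is the triangle inequality for `s_p`.
-/

section PointedDist

variable {X : Type*}

def PtolemyInequality (X : Type*) [PseudoMetricSpace X] : Prop :=
  ∀ x1 x2 x3 x4 : X,
    dist x1 x2 * dist x3 x4 ≤ dist x1 x4 * dist x2 x3 + dist x1 x3 * dist x2 x4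

/-- The distance `s_p` of the paper. -/
noncomputable def pointedDist [PseudoMetricSpace X] (p x y : X) : ℝ :=
  dist x y / ((1 + dist x p) * (1 + dist y p))

theorem pointedDist_nonneg [PseudoMetricSpace X] (p x y : X) : 0 ≤ pointedDist p x y := by
  unfold pointedDist
  positivity

theorem pointedDist_comm [PseudoMetricSpace X] (p x y : X) :
    pointedDist p x y = pointedDist p y x := by
  rw [pointedDist, pointedDist, dist_comm x y, mul_comm]

theorem pointedDist_eq_zero_iff [MetricSpace X] (p x y : X) :
    pointedDist p x y = 0 ↔ x = y := by
  have hden : (1 + dist x p) * (1 + dist y p) ≠ 0 := by positivity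
  rw [pointedDist, div_eq_zero_iff, or_iff_left hden, dist_eq_zero]

theorem dist_mul_one_add_dist_le_of_ptolemy [PseudoMetricSpace X] (hPt : PtolemyInequality X)
    (p x y z : X) :
    dist x z * (1 + dist y p) ≤ dist x y * (1 + dist z p) + dist y z * (1 + dist x p) := by
  have hPtolemy := hPt x z y p
  rw [dist_comm z y] at hPtolemy
  linarith [dist_triangle x y z]

theorem div_mul_le_div_mul_add_div_mul {u v w a b c : ℝ} (ha : 0 < a) (hb : 0 < b) (hc : 0 < c)
    (h : w * b ≤ u * c + v * a) : w / (a * c) ≤ u / (a * b) + v / (b * c) := by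
  have key : u / (a * b) + v / (b * c) - w / (a * c) = (u * c + v * a - w * b) / (a * b * c) := by
    field_simp
  have : 0 ≤ (u * c + v * a - w * b) / (a * b * c) := by
    apply div_nonneg <;> [linarith; positivity]
  linarith

theorem pointedDist_triangle [PseudoMetricSpace X] (hPt : PtolemyInequality X) (p x y z : X) :
    pointedDist p x z ≤ pointedDist p x y + pointedDist p y z :=
  div_mul_le_div_mul_add_div_mul (by positivity) (by positivity) (by positivity)
    (dist_mul_one_add_dist_le_of_ptolemy hPt p x y z)

end PointedDist

theorem stmt6 {X : Type*} [MetricSpace X]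
    (hPt : ∀ x1 x2 x3 x4 : X,
      dist x1 x2 * dist x3 x4 ≤ dist x1 x4 * dist x2 x3 + dist x1 x3 * dist x2 x4)
    (p : X) :
    (∀ x y : X, 0 ≤ dist x y / ((1 + dist x p) * (1 + dist y p))) ∧
    (∀ x y : X, dist x y / ((1 + dist x p) * (1 + dist y p)) = 0 ↔ x = y) ∧
    (∀ x y : X, dist x y / ((1 + dist x p) * (1 + dist y p)) =
      dist y x / ((1 + dist y p) * (1 + dist x p))) ∧
    (∀ x y z : X, dist x z / ((1 + dist x p) * (1 + dist z p)) ≤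
      dist x y / ((1 + dist x p) * (1 + dist y p)) +
      dist y z / ((1 + dist y p) * (1 + dist z p))) :=
  ⟨pointedDist_nonneg p, pointedDist_eq_zero_iff p, pointedDist_comm p,
    pointedDist_triangle hPt p⟩
end

section
/- If (X,d) is a Ptolemy metric space and p ∈ X, then the metric space (X, s_p), where s_p(x,y) = d(x,y)/((1+d(x,p))(1+d(y,p))), is again a Ptolemy space: s_p(x1,x2)s_p(x3,x4) ≤ s_p(x1,x3)s_p(x2,x4) + s_p(x1,x4)s_p(x2,x3) for all x1,x2,x3,x4 ∈ X. -/
/-!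
Dividing a metric by a factor `v x * v y` multiplies each of the three products of opposite
distances of a quadruple by the same nonnegative number `(v x₁ * v x₂ * v x₃ * v x₄)⁻¹`,
so the Ptolemy inequality survives; `s_p` is the case `v x = 1 + d(x, p)`.
-/

def IsPtolemy {X : Type*} (d : X → X → ℝ) : Prop :=
  ∀ x₁ x₂ x₃ x₄, d x₁ x₂ * d x₃ x₄ ≤ d x₁ x₄ * d x₂ x₃ + d x₁ x₃ * d x₂ x₄

theorem IsPtolemy.div_mul {X : Type*} {d : X → X → ℝ} (hd : IsPtolemy d) {v : X → ℝ}
    (hv : ∀ x, 0 ≤ v x) : IsPtolemy fun x y => d x y / (v x * v y) := by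
  intro x₁ x₂ x₃ x₄
  have hW : 0 ≤ (v x₁ * v x₂ * v x₃ * v x₄)⁻¹ := by
    have := hv x₁; have := hv x₂; have := hv x₃; have := hv x₄
    positivity
  calc d x₁ x₂ / (v x₁ * v x₂) * (d x₃ x₄ / (v x₃ * v x₄))
      = d x₁ x₂ * d x₃ x₄ * (v x₁ * v x₂ * v x₃ * v x₄)⁻¹ := by
        simp only [div_eq_mul_inv, mul_inv]; ring
    _ ≤ (d x₁ x₄ * d x₂ x₃ + d x₁ x₃ * d x₂ x₄) * (v x₁ * v x₂ * v x₃ * v x₄)⁻¹ :=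
        mul_le_mul_of_nonneg_right (hd x₁ x₂ x₃ x₄) hW
    _ = d x₁ x₄ / (v x₁ * v x₄) * (d x₂ x₃ / (v x₂ * v x₃)) +
          d x₁ x₃ / (v x₁ * v x₃) * (d x₂ x₄ / (v x₂ * v x₄)) := by
        simp only [div_eq_mul_inv, mul_inv]; ring

theorem stmt7 {X : Type*} [MetricSpace X]
    (hPt : ∀ x1 x2 x3 x4 : X,
      dist x1 x2 * dist x3 x4 ≤ dist x1 x4 * dist x2 x3 + dist x1 x3 * dist x2 x4)
    (p : X) (x1 x2 x3 x4 : X) :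
    (dist x1 x2 / ((1 + dist x1 p) * (1 + dist x2 p))) *
      (dist x3 x4 / ((1 + dist x3 p) * (1 + dist x4 p))) ≤
    (dist x1 x3 / ((1 + dist x1 p) * (1 + dist x3 p))) *
      (dist x2 x4 / ((1 + dist x2 p) * (1 + dist x4 p))) +
    (dist x1 x4 / ((1 + dist x1 p) * (1 + dist x4 p))) *
      (dist x2 x3 / ((1 + dist x2 p) * (1 + dist x3 p))) :=
  (IsPtolemy.div_mul hPt (v := fun x => 1 + dist x p) (fun _ => by positivity)
    x1 x2 x3 x4).trans_eq (add_comm _ _)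
end

section
/- If (X,d) is a Ptolemy metric space and p ∈ X, then S_p(x,y) = log(1 + d(x,y)/((1+d(x,p))(1+d(y,p)))) is a metric on X that is strongly hyperbolic with parameter ε = 2: exp(S_p(x,y)+S_p(z,t)) ≤ exp(S_p(x,z)+S_p(y,t)) + exp(S_p(x,t)+S_p(z,y)) for all x,y,z,t ∈ X. -/
/-!
Write `k = weightedDist p`, so that `S_p = log (1 + k)`. Ptolemy's inequality for `x, z, y, p`
together with the triangle inequality gives
`(1 + d(y,p)) d(x,z) ≤ (1 + d(z,p)) d(x,y) + (1 + d(x,p)) d(y,z)`, which is the triangle inequality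
for `k`; and `k ≤ 1` because `d(x,y) ≤ d(x,p) + d(p,y)`. Being `d` times a product of factors
`(1 + d(·,p))⁻¹`, `k` inherits Ptolemy's inequality. In the exponentiated strong hyperbolicity
inequality for `log (1 + k)`, the quadratic terms are then controlled by Ptolemy for `k` and the
linear ones by `k(x,y) + k(z,t) ≤ k(x,t) + k(t,y) + 1`.
-/

open Real

def IsPtolemaic (X : Type*) [PseudoMetricSpace X] : Prop :=
  ∀ x1 x2 x3 x4 : X, dist x1 x2 * dist x3 x4 ≤ dist x1 x4 * dist x2 x3 + dist x1 x3 * dist x2 x4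

noncomputable def weightedDist {X : Type*} [PseudoMetricSpace X] (p x y : X) : ℝ :=
  dist x y / ((1 + dist x p) * (1 + dist y p))

section PseudoMetric

variable {X : Type*} [PseudoMetricSpace X] (p : X)

lemma weightedDist_nonneg (x y : X) : 0 ≤ weightedDist p x y := by
  unfold weightedDist; positivity

lemma weightedDist_comm (x y : X) : weightedDist p x y = weightedDist p y x := by
  rw [weightedDist, weightedDist, dist_comm, mul_comm]

lemma weightedDist_le_one (x y : X) : weightedDist p x y ≤ 1 := by
  rw [weightedDist, div_le_one (by positivity)]
  have : 0 ≤ dist x p * dist y p := by positivity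
  linarith [dist_triangle_right x y p]

lemma weightedDist_triangle (hX : IsPtolemaic X) (x y z : X) :
    weightedDist p x z ≤ weightedDist p x y + weightedDist p y z := by
  have key : (1 + dist y p) * dist x z ≤ (1 + dist z p) * dist x y + (1 + dist x p) * dist y z := by
    have := hX x z y p
    rw [dist_comm z y] at this
    linarith [dist_triangle x y z]
  calc weightedDist p x z
      = (1 + dist y p) * dist x z / ((1 + dist x p) * (1 + dist y p) * (1 + dist z p)) := by
        rw [weightedDist]; field_simp
    _ ≤ ((1 + dist z p) * dist x y + (1 + dist x p) * dist y z) /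
          ((1 + dist x p) * (1 + dist y p) * (1 + dist z p)) := by gcongr
    _ = weightedDist p x y + weightedDist p y z := by
        rw [weightedDist, weightedDist]; field_simp

lemma weightedDist_ptolemy (hX : IsPtolemaic X) (x y z t : X) :
    weightedDist p x y * weightedDist p z t ≤
      weightedDist p x t * weightedDist p y z + weightedDist p x z * weightedDist p y t := by
  simp only [weightedDist, div_eq_mul_inv, mul_inv]
  set w : X → ℝ := fun u => (1 + dist u p)⁻¹
  have hw : 0 ≤ w x * w y * w z * w t := by positivity
  calc dist x y * (w x * w y) * (dist z t * (w z * w t))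
      = dist x y * dist z t * (w x * w y * w z * w t) := by ring
    _ ≤ (dist x t * dist y z + dist x z * dist y t) * (w x * w y * w z * w t) := by
        gcongr; exact hX x y z t
    _ = _ := by ring

lemma one_add_weightedDist_mul_le (hX : IsPtolemaic X) (x y z t : X) :
    (1 + weightedDist p x y) * (1 + weightedDist p z t) ≤
      (1 + weightedDist p x z) * (1 + weightedDist p y t) +
        (1 + weightedDist p x t) * (1 + weightedDist p z y) := by
  have hquad := weightedDist_ptolemy p hX x y z t
  have hlin := weightedDist_triangle p hX x t y
  rw [weightedDist_comm p t y] at hlin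
  rw [weightedDist_comm p z y]
  linarith [weightedDist_le_one p z t, weightedDist_nonneg p x z, weightedDist_nonneg p y z]

end PseudoMetric

lemma weightedDist_eq_zero_iff {X : Type*} [MetricSpace X] (p x y : X) :
    weightedDist p x y = 0 ↔ x = y := by
  rw [weightedDist, div_eq_zero_iff, dist_eq_zero, or_iff_left (by positivity)]

theorem stmt8 {X : Type*} [MetricSpace X]
    (hPt : ∀ x1 x2 x3 x4 : X,
      dist x1 x2 * dist x3 x4 ≤ dist x1 x4 * dist x2 x3 + dist x1 x3 * dist x2 x4)
    (p : X) :
    let S : X → X → ℝ := fun x y =>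
      Real.log (1 + dist x y / ((1 + dist x p) * (1 + dist y p)))
    (∀ x y : X, 0 ≤ S x y) ∧
    (∀ x y : X, S x y = 0 ↔ x = y) ∧
    (∀ x y : X, S x y = S y x) ∧
    (∀ x y z : X, S x z ≤ S x y + S y z) ∧
    (∀ x y z t : X,
      Real.exp (S x y + S z t) ≤ Real.exp (S x z + S y t) + Real.exp (S x t + S z y)) := by
  intro S
  have hS (x y : X) : S x y = log (1 + weightedDist p x y) := rfl
  have hpos (x y : X) : 0 < 1 + weightedDist p x y := by linarith [weightedDist_nonneg p x y]
  refine ⟨fun x y => ?_, fun x y => ?_, fun x y => ?_, fun x y z => ?_, fun x y z t => ?_⟩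
  · rw [hS]
    exact log_nonneg (by linarith [weightedDist_nonneg p x y])
  · rw [hS, ← log_one, log_injOn_pos.eq_iff (hpos x y) (Set.mem_Ioi.2 one_pos), add_eq_left,
      weightedDist_eq_zero_iff]
  · rw [hS, hS, weightedDist_comm]
  · rw [hS, hS, hS, ← log_mul (hpos x y).ne' (hpos y z).ne']
    apply log_le_log (hpos x z)
    have := mul_nonneg (weightedDist_nonneg p x y) (weightedDist_nonneg p y z)
    linarith [weightedDist_triangle p hPt x y z]
  · simp only [hS, exp_add, exp_log (hpos _ _)]
    exact one_add_weightedDist_mul_le p hPt x y z t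
end

section
/- If (X,d) is a Ptolemy metric space and p ∈ X, then χ_p(x,y) = log(1 + d(x,y)/(d(p,x)·d(p,y))) defines a metric on X \ {p}. -/
/-!
Put `δ_p(x, y) = d(x, y) / (d(p, x) d(p, y))`. Dividing the Ptolemy inequality for the quadruple
`x, z, y, p` by `d(p, x) d(p, y) d(p, z)` shows that `δ_p` satisfies the triangle inequality, and
then `1 + δ_p(x, z) ≤ 1 + δ_p(x, y) + δ_p(y, z) ≤ (1 + δ_p(x, y)) (1 + δ_p(y, z))`, so taking
logarithms gives the triangle inequality for `χ_p = log (1 + δ_p)`.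
-/

open Real

lemma Real.log_one_add_eq_zero_iff {t : ℝ} (ht : -1 < t) : log (1 + t) = 0 ↔ t = 0 := by
  rw [log_eq_zero]
  constructor
  · rintro (h | h | h) <;> linarith
  · intro h
    simp [h]

lemma Real.log_one_add_le_add_of_le_add {a b c : ℝ} (ha : -1 < a) (hb : 0 ≤ b) (hc : 0 ≤ c)
    (h : a ≤ b + c) : log (1 + a) ≤ log (1 + b) + log (1 + c) := by
  rw [← log_mul (by positivity) (by positivity)]
  apply log_le_log (by linarith)
  nlinarith [mul_nonneg hb hc]

section InversionDist

variable {X : Type*} [MetricSpace X]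

noncomputable def inversionDist (p x y : X) : ℝ := dist x y / (dist p x * dist p y)

lemma inversionDist_nonneg (p x y : X) : 0 ≤ inversionDist p x y := by
  unfold inversionDist
  positivity

lemma inversionDist_comm (p x y : X) : inversionDist p x y = inversionDist p y x := by
  rw [inversionDist, inversionDist, dist_comm x y, mul_comm]

lemma inversionDist_eq_zero_iff {p x y : X} (hx : x ≠ p) (hy : y ≠ p) :
    inversionDist p x y = 0 ↔ x = y := by
  have hpx : dist p x ≠ 0 := dist_ne_zero.mpr hx.symm
  have hpy : dist p y ≠ 0 := dist_ne_zero.mpr hy.symm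
  rw [inversionDist, div_eq_zero_iff, mul_eq_zero, dist_eq_zero]
  tauto

lemma inversionDist_triangle {p x y z : X}
    (hPt : dist x z * dist y p ≤ dist x p * dist z y + dist x y * dist z p)
    (hx : x ≠ p) (hy : y ≠ p) (hz : z ≠ p) :
    inversionDist p x z ≤ inversionDist p x y + inversionDist p y z := by
  have hpx : 0 < dist p x := dist_pos.mpr hx.symm
  have hpy : 0 < dist p y := dist_pos.mpr hy.symm
  have hpz : 0 < dist p z := dist_pos.mpr hz.symm
  rw [dist_comm y p, dist_comm x p, dist_comm z y, dist_comm z p] at hPt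
  unfold inversionDist
  rw [div_add_div _ _ (by positivity) (by positivity), div_le_div_iff₀ (by positivity)
    (by positivity)]
  calc dist x z * (dist p x * dist p y * (dist p y * dist p z))
      = dist x z * dist p y * (dist p x * dist p y * dist p z) := by ring
    _ ≤ (dist p x * dist y z + dist x y * dist p z) * (dist p x * dist p y * dist p z) := by
        gcongr
    _ = (dist x y * (dist p y * dist p z) + dist p x * dist p y * dist y z)
          * (dist p x * dist p z) := by ring

end InversionDist

theorem stmt10 {X : Type*} [MetricSpace X]
    (hPt : ∀ x1 x2 x3 x4 : X,
      dist x1 x2 * dist x3 x4 ≤ dist x1 x4 * dist x2 x3 + dist x1 x3 * dist x2 x4)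
    (p : X) :
    let χ : X → X → ℝ := fun x y => Real.log (1 + dist x y / (dist p x * dist p y))
    (∀ x y : X, x ≠ p → y ≠ p → 0 ≤ χ x y) ∧
    (∀ x y : X, x ≠ p → y ≠ p → (χ x y = 0 ↔ x = y)) ∧
    (∀ x y : X, x ≠ p → y ≠ p → χ x y = χ y x) ∧
    (∀ x y z : X, x ≠ p → y ≠ p → z ≠ p → χ x z ≤ χ x y + χ y z) := by
  have hδ : ∀ x y : X, -1 < inversionDist p x y := fun x y => by
    linarith [inversionDist_nonneg p x y]
  refine ⟨fun x y _ _ => ?_, fun x y hx hy => ?_, fun x y _ _ => ?_, fun x y z hx hy hz => ?_⟩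
  · exact log_nonneg (le_add_of_nonneg_right (inversionDist_nonneg p x y))
  · exact (log_one_add_eq_zero_iff (hδ x y)).trans (inversionDist_eq_zero_iff hx hy)
  · exact congrArg (fun t => log (1 + t)) (inversionDist_comm p x y)
  · exact log_one_add_le_add_of_le_add (hδ x z) (inversionDist_nonneg p x y)
      (inversionDist_nonneg p y z) (inversionDist_triangle (hPt x z y p) hx hy hz)
end

section
/- If (X,d) is a Ptolemy metric space and x0, x1, x2, x3, x4 ∈ X, then with p_i = d(x0,x_i) and d_{ij} = d(x_i,x_j), we have p3·p4·d12 + p1·p2·d34 ≤ p1·p3·d24 + p2·p4·d13 + p2·p3·d14 + p1·p4·d23. -/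
/-! Each of the Ptolemy inequalities for the quadruples `(x₁, x₂, x₀, x₃)`, `(x₁, x₂, x₀, x₄)`,
`(x₃, x₄, x₀, x₂)`, `(x₃, x₄, x₀, x₁)`, multiplied by the distance from `x₀` to the fifth point,
bounds one of the two terms on the left by two of the six terms on the right. Every right-hand
term occurs exactly twice among these bounds, so their average is the claim. -/

lemma dist_mul_dist_mul_dist_le_of_ptolemy {X : Type*} [MetricSpace X]
    (hPt : ∀ x1 x2 x3 x4 : X,
      dist x1 x2 * dist x3 x4 ≤ dist x1 x4 * dist x2 x3 + dist x1 x3 * dist x2 x4)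
    (o a b c w : X) :
    dist o c * dist o w * dist a b ≤
      dist o b * dist o w * dist a c + dist o a * dist o w * dist b c := by
  have hPt' : dist o c * dist a b ≤ dist o b * dist a c + dist o a * dist b c := by
    have := hPt a b o c
    rw [dist_comm a o, dist_comm b o] at this
    linarith
  have hw := mul_le_mul_of_nonneg_left hPt' (dist_nonneg (x := o) (y := w))
  linarith

theorem stmt11 {X : Type*} [MetricSpace X]
    (hPt : ∀ x1 x2 x3 x4 : X,
      dist x1 x2 * dist x3 x4 ≤ dist x1 x4 * dist x2 x3 + dist x1 x3 * dist x2 x4)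
    (x0 x1 x2 x3 x4 : X) :
    dist x0 x3 * dist x0 x4 * dist x1 x2 + dist x0 x1 * dist x0 x2 * dist x3 x4 ≤
      dist x0 x1 * dist x0 x3 * dist x2 x4 + dist x0 x2 * dist x0 x4 * dist x1 x3 +
      dist x0 x2 * dist x0 x3 * dist x1 x4 + dist x0 x1 * dist x0 x4 * dist x2 x3 := by
  have h₁ := dist_mul_dist_mul_dist_le_of_ptolemy hPt x0 x1 x2 x3 x4
  have h₂ := dist_mul_dist_mul_dist_le_of_ptolemy hPt x0 x1 x2 x4 x3
  have h₃ := dist_mul_dist_mul_dist_le_of_ptolemy hPt x0 x3 x4 x2 x1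
  have h₄ := dist_mul_dist_mul_dist_le_of_ptolemy hPt x0 x3 x4 x1 x2
  rw [dist_comm x3 x2, dist_comm x4 x2] at h₃
  rw [dist_comm x3 x1, dist_comm x4 x1] at h₄
  linarith
end

section
/- Let a ∈ Bⁿ (the open unit ball in ℝⁿ) and let f : Bⁿ \ {0} → Bⁿ \ {a} be a Möbius map of the unit ball with f(0) = a. Then for all x, y ∈ Bⁿ \ {0}: χ_0(x,y) ≤ χ_a(f(x),f(y)) ≤ χ_0(x,y) - log(1 - |a|²), where χ_p(u,v) = log(1 + |u-v|/(|u-p||v-p|)). Equality holds in both inequalities if and only if a = 0. -/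
/-- `f` preserves the absolute cross-ratio on `s` (the characteristic property of
Möbius maps, stated multiplicatively to avoid divisions). -/
def PreservesCrossRatio {n : ℕ} (f : EuclideanSpace ℝ (Fin n) → EuclideanSpace ℝ (Fin n))
    (s : Set (EuclideanSpace ℝ (Fin n))) : Prop :=
  ∀ x ∈ s, ∀ y ∈ s, ∀ z ∈ s, ∀ t ∈ s,
    dist (f x) (f y) * dist (f z) (f t) * dist x z * dist y t =
      dist x y * dist z t * dist (f x) (f z) * dist (f y) (f t)

/-!
Cross-ratio invariance together with `f 0 = a` says that `f`, conjugated by the unit inversions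
centred at `0` and at `a`, scales all distances by one constant `c`:
`‖f x - f y‖ / (‖f x - a‖ * ‖f y - a‖) = c * ‖x - y‖ / (‖x‖ * ‖y‖)`.
The conjugated map carries the exterior of the unit ball onto the exterior of a ball of radius
`(1 - ‖a‖²)⁻¹`. The midpoint defect `sup_{u,v ∈ S} (2 inf_{w ∈ S} max (d(u,w), d(w,v)) - d(u,v))`
of a set scales linearly under similarities and is positive and finite for the exterior of a
ball, so `c = (1 - ‖a‖²)⁻¹`. Hence `χ_a (f x) (f y) = log (1 + c t)` where `χ_0 x y = log (1 + t)`,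
and both inequalities and their equality case are elementary.
-/

open EuclideanGeometry Metric Set
open scoped Pointwise RealInnerProductSpace

section MidpointDefect

variable {α β : Type*} [PseudoMetricSpace α] [PseudoMetricSpace β]

noncomputable def midpointRadius (S : Set α) (u v : α) : ℝ :=
  sInf ((fun w => max (dist u w) (dist w v)) '' S)

noncomputable def midpointGap (S : Set α) (u v : α) : ℝ :=
  2 * midpointRadius S u v - dist u v

noncomputable def midpointDefect (S : Set α) : ℝ :=
  sSup (Function.uncurry (midpointGap S) '' S ×ˢ S)

lemma midpointRadius_le {S : Set α} {u v w : α} (hw : w ∈ S) :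
    midpointRadius S u v ≤ max (dist u w) (dist w v) :=
  csInf_le ⟨0, forall_mem_image.2 fun _ _ => le_max_of_le_left dist_nonneg⟩
    (mem_image_of_mem _ hw)

lemma le_midpointRadius {S : Set α} {u v : α} {b : ℝ} (hS : S.Nonempty)
    (h : ∀ w ∈ S, b ≤ max (dist u w) (dist w v)) : b ≤ midpointRadius S u v :=
  le_csInf (hS.image _) (forall_mem_image.2 h)

variable {S : Set α} {g : α → β} {c : ℝ}

lemma midpointRadius_image (hc : 0 ≤ c)
    (hg : ∀ u ∈ S, ∀ v ∈ S, dist (g u) (g v) = c * dist u v) {u v : α} (hu : u ∈ S)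
    (hv : v ∈ S) : midpointRadius (g '' S) (g u) (g v) = c * midpointRadius S u v := by
  have : (fun w => max (dist (g u) w) (dist w (g v))) '' (g '' S) =
      c • (fun w => max (dist u w) (dist w v)) '' S := by
    rw [image_image, ← image_smul, image_image]
    refine image_congr fun w hw => ?_
    rw [hg u hu w hw, hg w hw v hv, smul_eq_mul, mul_max_of_nonneg _ _ hc]
  rw [midpointRadius, this, Real.sInf_smul_of_nonneg hc, smul_eq_mul, midpointRadius]

lemma midpointDefect_image (hc : 0 ≤ c)
    (hg : ∀ u ∈ S, ∀ v ∈ S, dist (g u) (g v) = c * dist u v) :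
    midpointDefect (g '' S) = c * midpointDefect S := by
  have : Function.uncurry (midpointGap (g '' S)) '' (g '' S) ×ˢ (g '' S) =
      c • Function.uncurry (midpointGap S) '' S ×ˢ S := by
    rw [prod_image_image_eq, image_image, ← image_smul, image_image]
    refine image_congr fun p hp => ?_
    simp only [Function.uncurry, midpointGap, smul_eq_mul]
    rw [midpointRadius_image hc hg hp.1 hp.2, hg _ hp.1 _ hp.2]
    ring
  rw [midpointDefect, this, Real.sSup_smul_of_nonneg hc, smul_eq_mul, midpointDefect]

end MidpointDefect

lemma dist_add_smul_add_smul {E : Type*} [SeminormedAddCommGroup E] [NormedSpace ℝ E] (z : E)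
    {r : ℝ} (hr : 0 ≤ r) (u v : E) : dist (z + r • u) (z + r • v) = r * dist u v := by
  rw [dist_add_left, dist_smul₀, Real.norm_of_nonneg hr]

lemma image_add_smul_compl_closedBall {E : Type*} [SeminormedAddCommGroup E] [NormedSpace ℝ E]
    (z : E) {r : ℝ} (hr : 0 < r) :
    (fun x => z + r • x) '' (closedBall (0 : E) 1)ᶜ = (closedBall z r)ᶜ := by
  ext w
  simp only [mem_image, mem_compl_iff, mem_closedBall, not_le, dist_eq_norm, sub_zero]
  constructor
  · rintro ⟨x, hx, rfl⟩
    rw [add_sub_cancel_left, norm_smul, Real.norm_of_nonneg hr.le]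
    nlinarith
  · intro hw
    refine ⟨r⁻¹ • (w - z), ?_, by simp [smul_smul, hr.ne']⟩
    rw [norm_smul, norm_inv, Real.norm_of_nonneg hr.le, lt_inv_mul_iff₀ hr, mul_one]
    exact hw

section BallExterior

variable {E : Type*} [NormedAddCommGroup E] [InnerProductSpace ℝ E] [Nontrivial E]
  {z : E} {r : ℝ}

lemma exists_mem_compl_closedBall_dist_eq (hr : 0 < r) (p : E) :
    ∃ w ∈ (closedBall z r)ᶜ, dist p w = 2 * r := by
  obtain ⟨v, hv⟩ := exists_norm_eq E (by positivity : 0 ≤ 2 * r)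
  have hpar := parallelogram_law_with_norm ℝ (p - z) v
  rw [hv] at hpar
  by_cases h : r < ‖p - z + v‖
  · refine ⟨p + v, ?_, ?_⟩
    · rw [mem_compl_iff, mem_closedBall, not_le, dist_eq_norm, add_sub_right_comm]
      exact h
    · rw [dist_eq_norm, sub_add_cancel_left, norm_neg, hv]
  · refine ⟨p - v, ?_, ?_⟩
    · rw [mem_compl_iff, mem_closedBall, not_le, dist_eq_norm, sub_right_comm]
      nlinarith [norm_nonneg (p - z - v), norm_nonneg (p - z + v)]
    · rw [dist_eq_norm, sub_sub_cancel, hv]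

lemma bddAbove_midpointGap_compl_closedBall (hr : 0 < r) :
    BddAbove (Function.uncurry (midpointGap (closedBall z r)ᶜ) ''
      (closedBall z r)ᶜ ×ˢ (closedBall z r)ᶜ) := by
  refine ⟨4 * r, forall_mem_image.2 fun ⟨u, v⟩ _ => ?_⟩
  obtain ⟨w, hw, hmw⟩ := exists_mem_compl_closedBall_dist_eq hr (midpoint ℝ u v)
  have huw : dist u w ≤ dist u v / 2 + 2 * r := by
    calc dist u w ≤ dist u (midpoint ℝ u v) + dist (midpoint ℝ u v) w := dist_triangle _ _ _
      _ = dist u v / 2 + 2 * r := by rw [dist_left_midpoint, hmw]; simp; ring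
  have hwv : dist w v ≤ dist u v / 2 + 2 * r := by
    calc dist w v ≤ dist w (midpoint ℝ u v) + dist (midpoint ℝ u v) v := dist_triangle _ _ _
      _ = dist u v / 2 + 2 * r := by rw [dist_comm, hmw, dist_midpoint_right]; simp; ring
  have := midpointRadius_le (u := u) (v := v) hw
  rw [Function.uncurry_apply_pair, midpointGap]
  linarith [max_le huw hwv]

lemma midpointDefect_compl_closedBall_pos (hr : 0 < r) :
    0 < midpointDefect (closedBall z r)ᶜ := by
  obtain ⟨v, hv⟩ := exists_norm_eq E (by positivity : 0 ≤ 2 * r)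
  have hmem : ∀ s : E, ‖s‖ = 2 * r → z + s ∈ (closedBall z r)ᶜ := fun s hs => by
    rw [mem_compl_iff, mem_closedBall, not_le, dist_eq_norm, add_sub_cancel_left, hs]
    linarith
  have hduv : dist (z + v) (z + -v) = 4 * r := by
    rw [dist_eq_norm, add_sub_add_left_eq_sub, sub_neg_eq_add, ← two_smul ℝ, norm_smul, hv]
    norm_num; ring
  -- parallelogram law: no point outside the ball is within `√5 r > 11 r / 5` of both `z ± v`
  have hrad : 11 * r / 5 ≤ midpointRadius (closedBall z r)ᶜ (z + v) (z + -v) := by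
    refine le_midpointRadius ⟨_, hmem v hv⟩ fun w hw => ?_
    rw [mem_compl_iff, mem_closedBall, not_le, dist_eq_norm] at hw
    have hpar := parallelogram_law_with_norm ℝ (w - z) v
    rw [hv] at hpar
    have h1 : dist (z + v) w = ‖w - z - v‖ := by rw [dist_comm, dist_eq_norm, sub_add_eq_sub_sub]
    have h2 : dist w (z + -v) = ‖w - z + v‖ := by
      rw [dist_eq_norm, sub_add_eq_sub_sub, sub_neg_eq_add]
    rw [h1, h2]
    by_contra! h
    have ha := (le_max_left _ _).trans_lt h
    have hb := (le_max_right _ _).trans_lt h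
    nlinarith [norm_nonneg (w - z - v), norm_nonneg (w - z + v)]
  have hgap := le_csSup (bddAbove_midpointGap_compl_closedBall (z := z) hr)
    (mem_image_of_mem _ (mk_mem_prod (hmem v hv) (hmem (-v) (by rw [norm_neg, hv]))))
  rw [← midpointDefect, Function.uncurry_apply_pair, midpointGap] at hgap
  linarith

end BallExterior

section Inversion

variable {E : Type*} [NormedAddCommGroup E] [InnerProductSpace ℝ E] {a x : E}

lemma dist_inversion_one {p u v : E} (hu : u ≠ p) (hv : v ≠ p) :
    dist (inversion p 1 u) (inversion p 1 v) = ‖u - v‖ / (‖u - p‖ * ‖v - p‖) := by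
  rw [dist_inversion_inversion hu hv, one_pow, dist_eq_norm, dist_eq_norm, dist_eq_norm]
  ring

lemma sq_dist_inversion_sub_sq (ha : ‖a‖ < 1) (hx : x ≠ a) :
    dist (inversion a 1 x) (a + (1 - ‖a‖ ^ 2)⁻¹ • a) ^ 2 - ((1 - ‖a‖ ^ 2)⁻¹) ^ 2 =
      (1 - ‖x‖ ^ 2) / ((1 - ‖a‖ ^ 2) * ‖x - a‖ ^ 2) := by
  have hlam : 0 < 1 - ‖a‖ ^ 2 := by nlinarith [norm_nonneg a]
  have hxa : 0 < ‖x - a‖ := norm_pos_iff.2 (sub_ne_zero.2 hx)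
  have hform : inversion a 1 x - (a + (1 - ‖a‖ ^ 2)⁻¹ • a) =
      (‖x - a‖ ^ 2)⁻¹ • (x - a) - (1 - ‖a‖ ^ 2)⁻¹ • a := by
    simp only [inversion, vsub_eq_sub, vadd_eq_add, dist_eq_norm, one_div, inv_pow]
    module
  have hinner : ⟪x - a, a⟫ = (‖x‖ ^ 2 - ‖a‖ ^ 2 - ‖x - a‖ ^ 2) / 2 := by
    have := norm_add_sq_real (x - a) a
    rw [sub_add_cancel] at this
    linarith
  rw [dist_eq_norm, hform, norm_sub_sq_real, real_inner_smul_left, real_inner_smul_right,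
    hinner, norm_smul, norm_smul, Real.norm_of_nonneg (by positivity),
    Real.norm_of_nonneg (inv_nonneg.2 hlam.le)]
  field_simp
  ring

lemma inversion_mem_compl_closedBall_iff (ha : ‖a‖ < 1) (hx : x ≠ a) :
    inversion a 1 x ∈ (closedBall (a + (1 - ‖a‖ ^ 2)⁻¹ • a) (1 - ‖a‖ ^ 2)⁻¹)ᶜ ↔ ‖x‖ < 1 := by
  have hlam : 0 < 1 - ‖a‖ ^ 2 := by nlinarith [norm_nonneg a]
  have key := sq_dist_inversion_sub_sq ha hx
  have hden : 0 < (1 - ‖a‖ ^ 2) * ‖x - a‖ ^ 2 := by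
    have := norm_pos_iff.2 (sub_ne_zero.2 hx); positivity
  rw [mem_compl_iff, mem_closedBall, not_le, ← sq_lt_sq₀ (by positivity) dist_nonneg,
    ← sub_pos, key, div_pos_iff_of_pos_right hden, sub_pos, sq_lt_one_iff₀ (norm_nonneg x)]

lemma image_inversion_ball_diff_singleton (ha : ‖a‖ < 1) :
    inversion a 1 '' (ball 0 1 \ {a}) =
      (closedBall (a + (1 - ‖a‖ ^ 2)⁻¹ • a) (1 - ‖a‖ ^ 2)⁻¹)ᶜ := by
  have hlam : 0 < 1 - ‖a‖ ^ 2 := by nlinarith [norm_nonneg a]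
  have ha_mem : a ∈ closedBall (a + (1 - ‖a‖ ^ 2)⁻¹ • a) (1 - ‖a‖ ^ 2)⁻¹ := by
    rw [mem_closedBall, dist_eq_norm, sub_add_cancel_left, norm_neg, norm_smul,
      Real.norm_of_nonneg (inv_nonneg.2 hlam.le)]
    exact mul_le_of_le_one_right (inv_nonneg.2 hlam.le) ha.le
  rw [(inversion_involutive a one_ne_zero).image_eq_preimage_symm]
  ext w
  rw [mem_preimage, mem_sdiff, mem_ball_zero_iff, mem_singleton_iff,
    inversion_eq_center one_ne_zero]
  by_cases hw : w = a
  · simp [hw, ha_mem]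
  · rw [← inversion_mem_compl_closedBall_iff ha ((inversion_eq_center one_ne_zero).not.2 hw),
      inversion_inversion a one_ne_zero]
    simp [hw]

end Inversion

lemma eq_div_mul_of_mul_eq_mul {ι : Type*} {S : Set ι} {A B : ι → ι → ℝ}
    (hB : ∀ x ∈ S, ∀ y ∈ S, x ≠ y → B x y ≠ 0)
    (h : ∀ x ∈ S, ∀ y ∈ S, ∀ t ∈ S, A x y * B y t = B x y * A y t)
    {p q : ι} (hp : p ∈ S) (hq : q ∈ S) (hpq : p ≠ q) :
    ∀ x ∈ S, ∀ y ∈ S, A x y = A p q / B p q * B x y := by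
  have hBpq := hB p hp q hq hpq
  have from_q : ∀ y ∈ S, A q y = A p q / B p q * B q y := fun y hy => by
    field_simp
    linear_combination -(h p hp q hq y hy)
  intro x hx y hy
  by_cases hxq : x = q
  · subst hxq
    exact from_q y hy
  · have hqx := hB q hq x hx (Ne.symm hxq)
    have := h q hq x hx y hy
    rw [from_q x hx] at this
    refine mul_left_cancel₀ hqx ?_
    linear_combination -this

section CrossRatio

variable {E : Type*} [NormedAddCommGroup E] [InnerProductSpace ℝ E] {f : E → E} {a : E}

lemma exists_ne_mem_ball_zero_diff_zero [Nontrivial E] :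
    ∃ p ∈ ball (0 : E) 1 \ {0}, ∃ q ∈ ball (0 : E) 1 \ {0}, p ≠ q := by
  obtain ⟨p, hp⟩ := exists_norm_eq E (by norm_num : (0 : ℝ) ≤ 1 / 2)
  obtain ⟨q, hq⟩ := exists_norm_eq E (by norm_num : (0 : ℝ) ≤ 1 / 4)
  refine ⟨p, ⟨?_, ?_⟩, q, ⟨?_, ?_⟩, ?_⟩
  · rw [mem_ball_zero_iff, hp]; norm_num
  · rintro rfl; norm_num at hp
  · rw [mem_ball_zero_iff, hq]; norm_num
  · rintro rfl; norm_num at hq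
  · rintro rfl; rw [hp] at hq; norm_num at hq

lemma dist_inversion_mul_dist_inversion_eq {s : Set E}
    (hcr : ∀ x ∈ s, ∀ y ∈ s, ∀ z ∈ s, ∀ t ∈ s,
      dist (f x) (f y) * dist (f z) (f t) * dist x z * dist y t =
        dist x y * dist z t * dist (f x) (f z) * dist (f y) (f t))
    (h0 : (0 : E) ∈ s) (hf0 : f 0 = a) (hfa : ∀ x ∈ s \ {0}, f x ≠ a) :
    ∀ x ∈ s \ {0}, ∀ y ∈ s \ {0}, ∀ t ∈ s \ {0},
      dist (inversion a 1 (f x)) (inversion a 1 (f y)) * dist (inversion 0 1 y) (inversion 0 1 t) =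
        dist (inversion 0 1 x) (inversion 0 1 y) *
          dist (inversion a 1 (f y)) (inversion a 1 (f t)) := by
  intro x hx y hy t ht
  have H := hcr x hx.1 y hy.1 0 h0 t ht.1
  rw [hf0] at H
  have := dist_pos.2 (hfa x hx)
  have := dist_pos.2 (hfa y hy)
  have := dist_pos.2 (hfa t ht)
  have := dist_pos.2 hx.2
  have := dist_pos.2 hy.2
  have := dist_pos.2 ht.2
  rw [dist_inversion_inversion (hfa x hx) (hfa y hy), dist_inversion_inversion hy.2 ht.2,
    dist_inversion_inversion hx.2 hy.2, dist_inversion_inversion (hfa y hy) (hfa t ht)]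
  field_simp
  rw [dist_comm a, dist_comm 0 t] at H
  linear_combination H

lemma eq_inv_of_dist_inversion_comp_eq_mul [Nontrivial E] (ha : ‖a‖ < 1) {c : ℝ} (hc : 0 ≤ c)
    (hf : f '' (ball 0 1 \ {0}) = ball 0 1 \ {a})
    (hsim : ∀ x ∈ ball (0 : E) 1 \ {0}, ∀ y ∈ ball (0 : E) 1 \ {0},
      dist (inversion a 1 (f x)) (inversion a 1 (f y)) =
        c * dist (inversion 0 1 x) (inversion 0 1 y)) :
    c = (1 - ‖a‖ ^ 2)⁻¹ := by
  have hlam : 0 < 1 - ‖a‖ ^ 2 := by nlinarith [norm_nonneg a]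
  have hinv0 : inversion (0 : E) 1 '' (closedBall 0 1)ᶜ = ball 0 1 \ {0} := by
    have : inversion (0 : E) 1 '' (ball 0 1 \ {0}) = (closedBall 0 1)ᶜ := by
      simpa using image_inversion_ball_diff_singleton (a := (0 : E)) (by simp)
    rw [← this, image_image]
    simp [inversion_inversion]
  set ψ : E → E := fun w => inversion a 1 (f (inversion 0 1 w))
  have hψ_image : ψ '' (closedBall 0 1)ᶜ =
      (closedBall (a + (1 - ‖a‖ ^ 2)⁻¹ • a) (1 - ‖a‖ ^ 2)⁻¹)ᶜ := by
    rw [← image_inversion_ball_diff_singleton ha, ← hf, ← hinv0, image_image, image_image]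
  have hψ_dist : ∀ u ∈ (closedBall (0 : E) 1)ᶜ, ∀ v ∈ (closedBall (0 : E) 1)ᶜ,
      dist (ψ u) (ψ v) = c * dist u v := fun u hu v hv => by
    rw [hsim _ (hinv0 ▸ mem_image_of_mem _ hu) _ (hinv0 ▸ mem_image_of_mem _ hv),
      inversion_inversion _ one_ne_zero, inversion_inversion _ one_ne_zero]
  have hD₁ := midpointDefect_image hc hψ_dist
  have hD₂ := midpointDefect_image (S := (closedBall (0 : E) 1)ᶜ) (inv_nonneg.2 hlam.le)
    (fun u _ v _ => dist_add_smul_add_smul (a + (1 - ‖a‖ ^ 2)⁻¹ • a) (inv_nonneg.2 hlam.le) u v)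
  rw [hψ_image] at hD₁
  rw [image_add_smul_compl_closedBall _ (inv_pos.2 hlam)] at hD₂
  exact mul_right_cancel₀ (midpointDefect_compl_closedBall_pos one_pos).ne' (hD₁.symm.trans hD₂)

lemma dist_inversion_comp_eq_inv_mul [Nontrivial E] (ha : ‖a‖ < 1)
    (hcr : ∀ x ∈ ball (0 : E) 1, ∀ y ∈ ball (0 : E) 1, ∀ z ∈ ball (0 : E) 1, ∀ t ∈ ball (0 : E) 1,
      dist (f x) (f y) * dist (f z) (f t) * dist x z * dist y t =
        dist x y * dist z t * dist (f x) (f z) * dist (f y) (f t))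
    (hf : BijOn f (ball 0 1 \ {0}) (ball 0 1 \ {a})) (hf0 : f 0 = a) :
    ∀ x ∈ ball (0 : E) 1 \ {0}, ∀ y ∈ ball (0 : E) 1 \ {0},
      dist (inversion a 1 (f x)) (inversion a 1 (f y)) =
        (1 - ‖a‖ ^ 2)⁻¹ * dist (inversion 0 1 x) (inversion 0 1 y) := by
  obtain ⟨p, hp, q, hq, hpq⟩ := exists_ne_mem_ball_zero_diff_zero (E := E)
  have hsim := eq_div_mul_of_mul_eq_mul
    (fun x _ y _ hxy => dist_ne_zero.2 ((inversion_injective 0 one_ne_zero).ne hxy))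
    (dist_inversion_mul_dist_inversion_eq hcr (by simp) hf0 fun x hx => (hf.mapsTo hx).2) hp hq hpq
  rwa [← eq_inv_of_dist_inversion_comp_eq_mul ha (by positivity) hf.image_eq hsim]

end CrossRatio

lemma log_one_add_le_log_one_add_inv_mul {l t : ℝ} (hl0 : 0 < l) (hl1 : l ≤ 1) (ht : 0 ≤ t) :
    Real.log (1 + t) ≤ Real.log (1 + l⁻¹ * t) :=
  Real.log_le_log (by positivity) (by nlinarith [one_le_inv_iff₀.2 ⟨hl0, hl1⟩])

lemma log_one_add_inv_mul_le {l t : ℝ} (hl0 : 0 < l) (hl1 : l ≤ 1) (ht : 0 ≤ t) :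
    Real.log (1 + l⁻¹ * t) ≤ Real.log (1 + t) - Real.log l := by
  rw [← Real.log_div (by positivity) hl0.ne']
  refine Real.log_le_log (by positivity) ?_
  rw [le_div_iff₀ hl0, add_mul, mul_right_comm, inv_mul_cancel₀ hl0.ne', one_mul, one_mul]
  linarith

lemma eq_one_of_log_one_add_eq {l t : ℝ} (hl0 : 0 < l) (ht : 0 < t)
    (h : Real.log (1 + t) = Real.log (1 + l⁻¹ * t)) : l = 1 := by
  have := Real.log_injOn_pos (by simp; positivity) (by simp; positivity) h
  have : l⁻¹ = 1 := by nlinarith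
  simpa using this

theorem stmt17 {n : ℕ} (hn : 2 ≤ n) (a : EuclideanSpace ℝ (Fin n)) (ha : ‖a‖ < 1)
    (f : EuclideanSpace ℝ (Fin n) → EuclideanSpace ℝ (Fin n))
    (hMob : PreservesCrossRatio f (Metric.ball 0 1))
    (hBij : Set.BijOn f (Metric.ball 0 1 \ {0}) (Metric.ball 0 1 \ {a}))
    (hf0 : f 0 = a) :
    let χ : EuclideanSpace ℝ (Fin n) → EuclideanSpace ℝ (Fin n) →
        EuclideanSpace ℝ (Fin n) → ℝ := fun p u v =>
      Real.log (1 + ‖u - v‖ / (‖u - p‖ * ‖v - p‖))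
    (∀ x ∈ Metric.ball (0 : EuclideanSpace ℝ (Fin n)) 1 \ {0},
      ∀ y ∈ Metric.ball (0 : EuclideanSpace ℝ (Fin n)) 1 \ {0},
        χ 0 x y ≤ χ a (f x) (f y) ∧
        χ a (f x) (f y) ≤ χ 0 x y - Real.log (1 - ‖a‖ ^ 2)) ∧
    ((∀ x ∈ Metric.ball (0 : EuclideanSpace ℝ (Fin n)) 1 \ {0},
      ∀ y ∈ Metric.ball (0 : EuclideanSpace ℝ (Fin n)) 1 \ {0},
        χ 0 x y = χ a (f x) (f y) ∧
        χ a (f x) (f y) = χ 0 x y - Real.log (1 - ‖a‖ ^ 2)) ↔ a = 0) := by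
  intro χ
  have : NeZero n := ⟨by omega⟩
  have hlam0 : 0 < 1 - ‖a‖ ^ 2 := by nlinarith [norm_nonneg a]
  have hlam1 : 1 - ‖a‖ ^ 2 ≤ 1 := by nlinarith [norm_nonneg a]
  have hχ0 : ∀ x ∈ ball (0 : EuclideanSpace ℝ (Fin n)) 1 \ {0}, ∀ y ∈ ball 0 1 \ {0},
      χ 0 x y = Real.log (1 + dist (inversion 0 1 x) (inversion 0 1 y)) := fun x hx y hy => by
    rw [dist_inversion_one hx.2 hy.2]
  have hχa : ∀ x ∈ ball (0 : EuclideanSpace ℝ (Fin n)) 1 \ {0}, ∀ y ∈ ball 0 1 \ {0},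
      χ a (f x) (f y) =
        Real.log (1 + (1 - ‖a‖ ^ 2)⁻¹ * dist (inversion 0 1 x) (inversion 0 1 y)) :=
    fun x hx y hy => by
      rw [← dist_inversion_comp_eq_inv_mul ha hMob hBij hf0 x hx y hy,
        dist_inversion_one (hBij.mapsTo hx).2 (hBij.mapsTo hy).2]
  refine ⟨fun x hx y hy => ?_, fun h => ?_, ?_⟩
  · rw [hχ0 x hx y hy, hχa x hx y hy]
    exact ⟨log_one_add_le_log_one_add_inv_mul hlam0 hlam1 dist_nonneg,
      log_one_add_inv_mul_le hlam0 hlam1 dist_nonneg⟩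
  · obtain ⟨p, hp, q, hq, hpq⟩ := exists_ne_mem_ball_zero_diff_zero (E := EuclideanSpace ℝ (Fin n))
    have heq := (h p hp q hq).1
    rw [hχ0 p hp q hq, hχa p hp q hq] at heq
    have := eq_one_of_log_one_add_eq hlam0
      (dist_pos.2 ((inversion_injective 0 one_ne_zero).ne hpq)) heq
    simpa using this
  · rintro rfl x hx y hy
    simp [hχ0 x hx y hy, hχa x hx y hy]
end
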